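/- Let ω > 0, γ₁ > 0 with sin-type nondegeneracy: the quantity e^{-ξω}e^{iγ₁ω} − e^{ξω}e^{-iγ₁ω} is nonzero for all ξ ∈ ℝ (equivalently sin(γ₁ω) ≠ 0). Then there exists a constant C depending only on ω and γ₁ such that for all ξ ∈ ℝ and all z ∈ [-ω, 0], |e^{-ξ(ω+z)}e^{iγ₁(ω+z)} + e^{ξ(ω+z)}e^{-iγ₁(ω+z)}|² / |e^{-ξω}e^{iγ₁ω} − e^{ξω}e^{-iγ₁ω}|² ≤ C. -/

import Mathlib

/-!
Put `x = ξ ω`. The two terms of each expression have moduli `e^{∓ξ(ω+z)}`, so the numerator is at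
most `2 cosh(ξ(ω+z)) ≤ 2 cosh x` and the denominator is at least `|e^{-x} - e^{x}| = 2 |sinh x|`.
Since `cosh² = 1 + sinh²`, the quotient is at most `1 + 4 / ‖D ξ‖²`, where `D ξ` is the denominator.
Finally `‖D‖` is continuous, nowhere zero and `≥ 2 |sinh x| → ∞`, so it is bounded below by some
`δ > 0`.
-/

open Complex Set Filter

lemma norm_ofReal_exp_mul_exp_of_re_eq_zero (x : ℝ) {θ : ℂ} (hθ : θ.re = 0) :
    ‖(Real.exp x : ℂ) * Complex.exp θ‖ = Real.exp x := by
  rw [norm_mul, Complex.norm_exp, hθ, Real.exp_zero, mul_one, Complex.norm_real,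
    Real.norm_of_nonneg (Real.exp_pos x).le]

lemma norm_exp_mul_exp_add_le_two_mul_cosh (x : ℝ) {θ : ℂ} (hθ : θ.re = 0) :
    ‖(Real.exp (-x) : ℂ) * Complex.exp θ + (Real.exp x : ℂ) * Complex.exp (-θ)‖
      ≤ 2 * Real.cosh x := by
  have hθ' : (-θ).re = 0 := by simp [hθ]
  calc _ ≤ ‖(Real.exp (-x) : ℂ) * Complex.exp θ‖ + ‖(Real.exp x : ℂ) * Complex.exp (-θ)‖ :=
        norm_add_le _ _
    _ = 2 * Real.cosh x := by
        rw [norm_ofReal_exp_mul_exp_of_re_eq_zero _ hθ,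
          norm_ofReal_exp_mul_exp_of_re_eq_zero _ hθ', Real.cosh_eq]
        ring

lemma two_mul_abs_sinh_le_norm_exp_mul_exp_sub (x : ℝ) {θ : ℂ} (hθ : θ.re = 0) :
    2 * |Real.sinh x|
      ≤ ‖(Real.exp (-x) : ℂ) * Complex.exp θ - (Real.exp x : ℂ) * Complex.exp (-θ)‖ := by
  have hθ' : (-θ).re = 0 := by simp [hθ]
  have h := abs_norm_sub_norm_le ((Real.exp (-x) : ℂ) * Complex.exp θ)
    ((Real.exp x : ℂ) * Complex.exp (-θ))
  rw [norm_ofReal_exp_mul_exp_of_re_eq_zero _ hθ,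
    norm_ofReal_exp_mul_exp_of_re_eq_zero _ hθ'] at h
  calc 2 * |Real.sinh x| = |Real.exp (-x) - Real.exp x| := by
        rw [Real.sinh_eq, abs_sub_comm, abs_div, abs_two]
        ring
    _ ≤ _ := h

lemma tendsto_abs_sinh_mul_cocompact {ω : ℝ} (hω : 0 < ω) :
    Tendsto (fun ξ : ℝ => |Real.sinh (ξ * ω)|) (cocompact ℝ) atTop := by
  have hlin : Tendsto (fun ξ : ℝ => |ξ| * ω) (cocompact ℝ) atTop :=
    tendsto_norm_cocompact_atTop.atTop_mul_const hω
  refine tendsto_atTop_mono (fun ξ => ?_) hlin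
  rw [Real.abs_sinh, abs_mul, abs_of_pos hω]
  exact Real.self_le_sinh_iff.mpr (by positivity)

lemma exists_pos_forall_le_norm_of_tendsto_cocompact {X E : Type*} [TopologicalSpace X]
    [Nonempty X] [NormedAddCommGroup E] {f : X → E} (hf : Continuous f) (hf0 : ∀ x, f x ≠ 0)
    (hlim : Tendsto (fun x => ‖f x‖) (cocompact X) atTop) : ∃ δ > 0, ∀ x, δ ≤ ‖f x‖ := by
  obtain ⟨x₀, hx₀⟩ := hf.norm.exists_forall_le hlim
  exact ⟨‖f x₀‖, norm_pos_iff.mpr (hf0 x₀), hx₀⟩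

lemma sq_div_sq_le_one_add_four_div_sq {N D δ x : ℝ} (hδ : 0 < δ) (hδD : δ ≤ D) (hN0 : 0 ≤ N)
    (hN : N ≤ 2 * Real.cosh x) (hD : 2 * |Real.sinh x| ≤ D) :
    N ^ 2 / D ^ 2 ≤ 1 + 4 / δ ^ 2 := by
  have hD0 : 0 < D := hδ.trans_le hδD
  have hN2 : N ^ 2 ≤ D ^ 2 + 4 := by
    calc N ^ 2 ≤ (2 * Real.cosh x) ^ 2 := pow_le_pow_left₀ hN0 hN 2
      _ = (2 * |Real.sinh x|) ^ 2 + 4 := by rw [mul_pow, Real.cosh_sq, mul_pow, sq_abs]; ring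
      _ ≤ D ^ 2 + 4 := by gcongr
  calc N ^ 2 / D ^ 2 ≤ (D ^ 2 + 4) / D ^ 2 := by gcongr
    _ = 1 + 4 / D ^ 2 := by field_simp
    _ ≤ 1 + 4 / δ ^ 2 := by gcongr

theorem stmt7_general (ω γ₁ : ℝ) (hω : 0 < ω)
    (hnd : ∀ ξ : ℝ,
      (Real.exp (-ξ * ω) : ℂ) * Complex.exp (Complex.I * (γ₁ : ℂ) * (ω : ℂ))
        - (Real.exp (ξ * ω) : ℂ) * Complex.exp (-(Complex.I * (γ₁ : ℂ) * (ω : ℂ))) ≠ 0) :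
    ∃ C : ℝ, ∀ ξ : ℝ, ∀ z ∈ Icc (-ω) 0,
      ‖(Real.exp (-ξ * (ω + z)) : ℂ) * Complex.exp (Complex.I * (γ₁ : ℂ) * ((ω : ℂ) + (z : ℂ)))
          + (Real.exp (ξ * (ω + z)) : ℂ) *
              Complex.exp (-(Complex.I * (γ₁ : ℂ) * ((ω : ℂ) + (z : ℂ))))‖ ^ 2
        / ‖(Real.exp (-ξ * ω) : ℂ) * Complex.exp (Complex.I * (γ₁ : ℂ) * (ω : ℂ))
          - (Real.exp (ξ * ω) : ℂ) * Complex.exp (-(Complex.I * (γ₁ : ℂ) * (ω : ℂ)))‖ ^ 2 ≤ C := by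
  have hre : ∀ t : ℝ, (Complex.I * (γ₁ : ℂ) * (t : ℂ)).re = 0 := fun t => by simp
  have hD : ∀ ξ : ℝ, 2 * |Real.sinh (ξ * ω)|
      ≤ ‖(Real.exp (-ξ * ω) : ℂ) * Complex.exp (Complex.I * (γ₁ : ℂ) * (ω : ℂ))
          - (Real.exp (ξ * ω) : ℂ) * Complex.exp (-(Complex.I * (γ₁ : ℂ) * (ω : ℂ)))‖ :=
    fun ξ => by simpa only [neg_mul] using two_mul_abs_sinh_le_norm_exp_mul_exp_sub _ (hre ω)
  obtain ⟨δ, hδ, hδD⟩ := exists_pos_forall_le_norm_of_tendsto_cocompact (by fun_prop) hnd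
    (tendsto_atTop_mono hD ((tendsto_abs_sinh_mul_cocompact hω).const_mul_atTop two_pos))
  refine ⟨1 + 4 / δ ^ 2, fun ξ z ⟨hz₁, hz₂⟩ => ?_⟩
  have hN : ‖(Real.exp (-ξ * (ω + z)) : ℂ) * Complex.exp (Complex.I * (γ₁ : ℂ) * ((ω : ℂ) + (z : ℂ)))
      + (Real.exp (ξ * (ω + z)) : ℂ) *
        Complex.exp (-(Complex.I * (γ₁ : ℂ) * ((ω : ℂ) + (z : ℂ))))‖ ≤ 2 * Real.cosh (ξ * ω) := by
    have hcosh : Real.cosh (ξ * (ω + z)) ≤ Real.cosh (ξ * ω) := by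
      rw [Real.cosh_le_cosh, abs_mul, abs_mul, abs_of_nonneg (by linarith : 0 ≤ ω + z),
        abs_of_pos hω]
      gcongr
      linarith
    rw [← Complex.ofReal_add, neg_mul]
    exact (norm_exp_mul_exp_add_le_two_mul_cosh _ (hre _)).trans (by linarith)
  exact sq_div_sq_le_one_add_four_div_sq hδ (hδD ξ) (norm_nonneg _) hN (hD ξ)

/-- Uniform bound `|cos(λ(ω+z))/sin(λω)|² ≤ C` for `λ = γ₁ + iξ`, uniformly in `ξ ∈ ℝ`
and `z ∈ [-ω,0]`, under the nondegeneracy assumption that the denominator never vanishes. -/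
theorem stmt7 (ω γ₁ : ℝ) (hω : 0 < ω) (hγ : 0 < γ₁)
    (hnd : ∀ ξ : ℝ,
      (Real.exp (-ξ * ω) : ℂ) * Complex.exp (Complex.I * (γ₁ : ℂ) * (ω : ℂ))
        - (Real.exp (ξ * ω) : ℂ) * Complex.exp (-(Complex.I * (γ₁ : ℂ) * (ω : ℂ))) ≠ 0) :
    ∃ C : ℝ, ∀ ξ : ℝ, ∀ z ∈ Icc (-ω) 0,
      ‖(Real.exp (-ξ * (ω + z)) : ℂ) * Complex.exp (Complex.I * (γ₁ : ℂ) * ((ω : ℂ) + (z : ℂ)))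
          + (Real.exp (ξ * (ω + z)) : ℂ) *
              Complex.exp (-(Complex.I * (γ₁ : ℂ) * ((ω : ℂ) + (z : ℂ))))‖ ^ 2
        / ‖(Real.exp (-ξ * ω) : ℂ) * Complex.exp (Complex.I * (γ₁ : ℂ) * (ω : ℂ))
          - (Real.exp (ξ * ω) : ℂ) * Complex.exp (-(Complex.I * (γ₁ : ℂ) * (ω : ℂ)))‖ ^ 2 ≤ C :=
  stmt7_general ω γ₁ hω hnd
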